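/- arXiv:2506.03950 — 7 statements merged into one kernel-verified Lean document; each statement's English description precedes it below -/
import Mathlib

section
/- A differentiable function f is L-smooth relative to a differentiable convex function φ on a convex set C (i.e., D_f(x,y) ≤ L·D_φ(x,y) for all x ∈ C, y ∈ int C) if and only if Lφ − f is convex on C. -/
open scoped RealInnerProductSpace

noncomputable def breg {n : ℕ} (h : EuclideanSpace ℝ (Fin n) → ℝ)
    (h' : EuclideanSpace ℝ (Fin n) → EuclideanSpace ℝ (Fin n))
    (x y : EuclideanSpace ℝ (Fin n)) : ℝ :=
  h x - h y - ⟪h' y, x - y⟫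

/-!
The inequality `D_f ≤ L • D_φ` rearranges to `D_g ≥ 0` for `g = L • φ - f`, i.e. to the
gradient inequality `⟪∇g y, x - y⟫ ≤ g x - g y`, so the theorem is the first-order
characterization of convexity of `g`. A convex function satisfies the gradient inequality
because its restriction to a segment lies above its tangent. Conversely, the gradient inequality
at interior base points gives every point of `int C` an affine minorant touching `g` there, so
`g` is convex on `int C`; convexity extends to `C` by pulling a segment of `C` towards an interior
point and passing to the limit with the continuity of `g` on `C`.
-/

open Filter Topology

section

variable {E : Type*} [NormedAddCommGroup E] [NormedSpace ℝ E] {s : Set E} {g : E → ℝ}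

theorem ConvexOn.le_sub_of_hasFDerivAt {D : E →L[ℝ] ℝ} {x y : E} (hg : ConvexOn ℝ s g)
    (hx : x ∈ s) (hy : y ∈ s) (hD : HasFDerivAt g D y) : D (x - y) ≤ g x - g y := by
  set ℓ : ℝ →ᵃ[ℝ] E := AffineMap.lineMap y x
  have hconv : ConvexOn ℝ (Set.Icc 0 1) (g ∘ ℓ) :=
    (hg.comp_affineMap ℓ).subset (fun t ht => hg.1.lineMap_mem hy hx ht) (convex_Icc 0 1)
  have hderiv : HasDerivAt (g ∘ ℓ) (D (x - y)) 0 := by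
    have hℓ : HasDerivAt ℓ (x - y) 0 := AffineMap.hasDerivAt_lineMap
    simpa [ℓ] using hD.comp_hasDerivAt_of_eq 0 hℓ (by simp [ℓ])
  simpa [slope, ℓ] using hconv.le_slope_of_hasDerivAt (by simp) (by simp) zero_lt_one hderiv

theorem convexOn_of_subgradient (hs : Convex ℝ s)
    (h : ∀ z ∈ s, ∃ D : E →L[ℝ] ℝ, ∀ x ∈ s, D (x - z) ≤ g x - g z) : ConvexOn ℝ s g := by
  refine ⟨hs, fun x hx y hy a b ha hb hab => ?_⟩
  obtain ⟨D, hD⟩ := h _ (hs hx hy ha hb hab)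
  have hcomb : a • (x - (a • x + b • y)) + b • (y - (a • x + b • y)) = 0 := by
    obtain rfl : b = 1 - a := by linarith
    module
  have hD0 := congrArg D hcomb
  simp only [map_add, map_smul, map_zero, smul_eq_mul] at hD0 ⊢
  have hsplit : g (a • x + b • y) = a * g (a • x + b • y) + b * g (a • x + b • y) := by
    rw [← add_mul, hab, one_mul]
  linarith [mul_le_mul_of_nonneg_left (hD x hx) ha, mul_le_mul_of_nonneg_left (hD y hy) hb]

theorem convexOn_of_convexOn_interior (hs : Convex ℝ s) (hs_int : (interior s).Nonempty)
    (hcont : ContinuousOn g s) (hg : ConvexOn ℝ (interior s) g) : ConvexOn ℝ s g := by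
  obtain ⟨w, hw⟩ := hs_int
  set p : E → ℝ → E := fun u t => (1 - t) • u + t • w
  have hp_mem : ∀ u ∈ s, ∀ t ∈ Set.Ioo (0 : ℝ) 1, p u t ∈ interior s := fun u hu t ht =>
    hs.combo_self_interior_mem_interior hu hw (by linarith [ht.2]) ht.1 (by ring)
  have hp_lim : ∀ u ∈ s, Tendsto (fun t => g (p u t)) (𝓝[>] 0) (𝓝 (g u)) := by
    intro u hu
    refine (hcont u hu).tendsto.comp (tendsto_nhdsWithin_iff.2 ⟨?_, ?_⟩)
    · have hcont_p : Continuous (p u) := by fun_prop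
      simpa [p] using hcont_p.continuousWithinAt.tendsto (x := 0) (s := Set.Ioi 0)
    · filter_upwards [Ioo_mem_nhdsGT zero_lt_one] with t ht
      exact interior_subset (hp_mem u hu t ht)
  refine ⟨hs, fun x hx y hy a b ha hb hab => ?_⟩
  have hz : a • x + b • y ∈ s := hs hx hy ha hb hab
  have hp_comb : ∀ t, p (a • x + b • y) t = a • p x t + b • p y t := by
    intro t
    obtain rfl : b = 1 - a := by linarith
    simp only [p]
    module
  refine le_of_tendsto_of_tendsto (hp_lim _ hz)
    (((hp_lim x hx).const_smul a).add ((hp_lim y hy).const_smul b)) ?_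
  filter_upwards [Ioo_mem_nhdsGT zero_lt_one] with t ht
  rw [hp_comb]
  exact hg.2 (hp_mem x hx t ht) (hp_mem y hy t ht) ha hb hab

end

theorem rel_smooth_iff_convex_diff_general {n : ℕ}
    (C U : Set (EuclideanSpace ℝ (Fin n))) (hC : Convex ℝ C)
    (hCint : (interior C).Nonempty)
    (hCU : C ⊆ U)
    (f φ : EuclideanSpace ℝ (Fin n) → ℝ)
    (f' φ' : EuclideanSpace ℝ (Fin n) → EuclideanSpace ℝ (Fin n))
    (hf : ∀ x ∈ U, HasGradientAt f (f' x) x)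
    (hφ : ∀ x ∈ U, HasGradientAt φ (φ' x) x)
    (L : ℝ) :
    (∀ x ∈ C, ∀ y ∈ interior C, breg f f' x y ≤ L * breg φ φ' x y) ↔
      ConvexOn ℝ C (fun x => L * φ x - f x) := by
  set g := fun x => L * φ x - f x
  set D := fun y =>
    L • InnerProductSpace.toDual ℝ _ (φ' y) - InnerProductSpace.toDual ℝ _ (f' y)
  have hD : ∀ y ∈ U, HasFDerivAt g (D y) y := fun y hy =>
    ((hφ y hy).hasFDerivAt.const_mul L).sub (hf y hy).hasFDerivAt
  have hbreg : ∀ x y, L * breg φ φ' x y - breg f f' x y = g x - g y - D y (x - y) := by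
    intro x y
    simp only [breg, g, D, sub_apply, smul_apply,
      InnerProductSpace.toDual_apply_apply, smul_eq_mul]
    ring
  have hfirst_order : (∀ x ∈ C, ∀ y ∈ interior C, breg f f' x y ≤ L * breg φ φ' x y) ↔
      ∀ x ∈ C, ∀ y ∈ interior C, D y (x - y) ≤ g x - g y := by
    refine forall₂_congr fun x _ => forall₂_congr fun y _ => ?_
    rw [← sub_nonneg, hbreg, sub_nonneg]
  rw [hfirst_order]
  constructor
  · intro h
    refine convexOn_of_convexOn_interior hC hCint
      (fun x hx => (hD x (hCU hx)).continuousAt.continuousWithinAt) ?_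
    exact convexOn_of_subgradient hC.interior fun z hz =>
      ⟨D z, fun x hx => h x (interior_subset hx) z hz⟩
  · intro hg x hx y hy
    exact hg.le_sub_of_hasFDerivAt hx (interior_subset hy) (hD y (hCU (interior_subset hy)))

theorem rel_smooth_iff_convex_diff {n : ℕ}
    (C U : Set (EuclideanSpace ℝ (Fin n))) (hC : Convex ℝ C)
    (hCint : (interior C).Nonempty)
    (hU : IsOpen U) (hCU : C ⊆ U)
    (f φ : EuclideanSpace ℝ (Fin n) → ℝ)
    (f' φ' : EuclideanSpace ℝ (Fin n) → EuclideanSpace ℝ (Fin n))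
    (hf : ∀ x ∈ U, HasGradientAt f (f' x) x)
    (hφ : ∀ x ∈ U, HasGradientAt φ (φ' x) x)
    (hφc : ConvexOn ℝ C φ)
    (L : ℝ) (hL : 0 < L) :
    (∀ x ∈ C, ∀ y ∈ interior C, breg f f' x y ≤ L * breg φ φ' x y) ↔
      ConvexOn ℝ C (fun x => L * φ x - f x) :=
  rel_smooth_iff_convex_diff_general C U hC hCint hCU f φ f' φ' hf hφ L
end

section
/- If f and φ are twice differentiable and ∇²f(x) ⪯ L∇²φ(x) (Löwner order) for all x in an open convex set C, then f is L-smooth relative to φ on C, i.e. D_f(x,y) ≤ L·D_φ(x,y) for all x, y ∈ C. -/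
open scoped RealInnerProductSpace

/-! With `g = L φ - f` one has `L D_φ - D_f = D_g`, and the Löwner hypothesis says that the
Hessian of `g` is positive semidefinite on `C`. Restricted to the segment from `y` to `x`, `g`
becomes a real function with nonnegative second derivative, which therefore lies above its
tangent line at `y`; this is `D_g(x, y) ≥ 0`. -/

open Set InnerProductSpace

theorem monotoneOn_Icc_of_hasDerivAt_nonneg {h h' : ℝ → ℝ} {a b : ℝ}
    (hh : ∀ t ∈ Icc a b, HasDerivAt h (h' t) t) (hnonneg : ∀ t ∈ Ioo a b, 0 ≤ h' t) :
    MonotoneOn h (Icc a b) :=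
  monotoneOn_of_hasDerivWithinAt_nonneg (convex_Icc a b)
    (fun t ht => (hh t ht).continuousAt.continuousWithinAt)
    (fun t ht => (hh t (interior_subset ht)).hasDerivWithinAt)
    (fun t ht => hnonneg t (by rwa [interior_Icc] at ht))

theorem add_deriv_mul_sub_le_of_deriv2_nonneg {h h' h'' : ℝ → ℝ} {a b : ℝ} (hab : a ≤ b)
    (hh : ∀ t ∈ Icc a b, HasDerivAt h (h' t) t) (hh' : ∀ t ∈ Icc a b, HasDerivAt h' (h'' t) t)
    (hnonneg : ∀ t ∈ Ioo a b, 0 ≤ h'' t) :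
    h a + h' a * (b - a) ≤ h b := by
  have h'_mono := monotoneOn_Icc_of_hasDerivAt_nonneg hh' hnonneg
  have ha : a ∈ Icc a b := left_mem_Icc.2 hab
  -- `h` minus its tangent line at `a` has the nonnegative derivative `h' t - h' a`.
  have hgap_mono : MonotoneOn (fun t => h t - t * h' a) (Icc a b) :=
    monotoneOn_Icc_of_hasDerivAt_nonneg (fun t ht => (hh t ht).sub (hasDerivAt_mul_const (h' a)))
      (fun t ht => sub_nonneg.2 (h'_mono ha (Ioo_subset_Icc_self ht) ht.1.le))
  have : h a - a * h' a ≤ h b - b * h' a := hgap_mono ha (right_mem_Icc.2 hab) hab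
  linarith

section InnerProductSpace

variable {E : Type*} [NormedAddCommGroup E] [InnerProductSpace ℝ E] [CompleteSpace E]
  {f g : E → ℝ} {f' g' x : E}

theorem HasGradientAt.sub (hf : HasGradientAt f f' x) (hg : HasGradientAt g g' x) :
    HasGradientAt (fun z => f z - g z) (f' - g') x := by
  rw [hasGradientAt_iff_hasFDerivAt] at *
  rw [map_sub]
  exact hf.sub hg

theorem HasGradientAt.const_mul (c : ℝ) (hf : HasGradientAt f f' x) :
    HasGradientAt (fun z => c * f z) (c • f') x := by
  rw [hasGradientAt_iff_hasFDerivAt] at *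
  rw [map_smulₛₗ, RCLike.conj_to_real]
  exact hf.const_smul c

theorem add_inner_gradient_le_of_hessian_nonneg {C : Set E} (hC : Convex ℝ C) {g' : E → E}
    {g'' : E → E →L[ℝ] E} (hg : ∀ z ∈ C, HasGradientAt g (g' z) z)
    (hg' : ∀ z ∈ C, HasFDerivAt g' (g'' z) z) (hpos : ∀ z ∈ C, ∀ v, 0 ≤ ⟪g'' z v, v⟫)
    {x y : E} (hx : x ∈ C) (hy : y ∈ C) :
    g y + ⟪g' y, x - y⟫ ≤ g x := by
  set γ : ℝ → E := fun t => y + t • (x - y)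
  have hγ : ∀ t, HasDerivAt γ (x - y) t := fun t =>
    ((hasDerivAt_id t).smul_const (x - y)).const_add y |>.congr_deriv (one_smul ℝ _)
  have hγC : ∀ t ∈ Icc (0 : ℝ) 1, γ t ∈ C := fun t ht => hC.add_smul_sub_mem hy hx ht
  have hline := add_deriv_mul_sub_le_of_deriv2_nonneg zero_le_one
    (h := fun t => g (γ t)) (h' := fun t => ⟪g' (γ t), x - y⟫)
    (h'' := fun t => ⟪g'' (γ t) (x - y), x - y⟫)
    (fun t ht => (hg _ (hγC t ht)).hasFDerivAt.comp_hasDerivAt t (hγ t))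
    (fun t ht => by
      simpa using ((hg' _ (hγC t ht)).comp_hasDerivAt t (hγ t)).inner ℝ (hasDerivAt_const t _))
    (fun t ht => hpos _ (hγC t (Ioo_subset_Icc_self ht)) _)
  simpa [γ] using hline

end InnerProductSpace

theorem breg_const_mul_sub {n : ℕ} (c : ℝ) (f φ : EuclideanSpace ℝ (Fin n) → ℝ)
    (f' φ' : EuclideanSpace ℝ (Fin n) → EuclideanSpace ℝ (Fin n)) (x y : EuclideanSpace ℝ (Fin n)) :
    breg (fun z => c * φ z - f z) (fun z => c • φ' z - f' z) x y =
      c * breg φ φ' x y - breg f f' x y := by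
  simp only [breg, inner_sub_left, inner_smul_left, RCLike.conj_to_real]
  ring

theorem rel_smooth_of_hessian_loewner_general {n : ℕ}
    (C : Set (EuclideanSpace ℝ (Fin n))) (hCc : Convex ℝ C)
    (f φ : EuclideanSpace ℝ (Fin n) → ℝ)
    (f' φ' : EuclideanSpace ℝ (Fin n) → EuclideanSpace ℝ (Fin n))
    (f'' φ'' : EuclideanSpace ℝ (Fin n) →
      EuclideanSpace ℝ (Fin n) →L[ℝ] EuclideanSpace ℝ (Fin n))
    (hf : ∀ x ∈ C, HasGradientAt f (f' x) x)
    (hφ : ∀ x ∈ C, HasGradientAt φ (φ' x) x)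
    (hf' : ∀ x ∈ C, HasFDerivAt f' (f'' x) x)
    (hφ' : ∀ x ∈ C, HasFDerivAt φ' (φ'' x) x)
    (L : ℝ)
    (hloewner : ∀ x ∈ C, ∀ v, ⟪f'' x v, v⟫ ≤ L * ⟪φ'' x v, v⟫) :
    ∀ x ∈ C, ∀ y ∈ C, breg f f' x y ≤ L * breg φ φ' x y := by
  intro x hx y hy
  have hconvex := add_inner_gradient_le_of_hessian_nonneg hCc
    (g := fun z => L * φ z - f z) (g' := fun z => L • φ' z - f' z)
    (fun z hz => ((hφ z hz).const_mul L).sub (hf z hz))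
    (fun z hz => ((hφ' z hz).const_smul L).sub (hf' z hz))
    (fun z hz v => by
      simpa [inner_sub_left, inner_smul_left] using hloewner z hz v)
    hx hy
  have hbreg := breg_const_mul_sub L f φ f' φ' x y
  have hnonneg : 0 ≤ breg (fun z => L * φ z - f z) (fun z => L • φ' z - f' z) x y := by
    rw [breg]
    linarith
  linarith

theorem rel_smooth_of_hessian_loewner {n : ℕ}
    (C : Set (EuclideanSpace ℝ (Fin n))) (hC : IsOpen C) (hCc : Convex ℝ C)
    (f φ : EuclideanSpace ℝ (Fin n) → ℝ)
    (f' φ' : EuclideanSpace ℝ (Fin n) → EuclideanSpace ℝ (Fin n))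
    (f'' φ'' : EuclideanSpace ℝ (Fin n) →
      EuclideanSpace ℝ (Fin n) →L[ℝ] EuclideanSpace ℝ (Fin n))
    (hf : ∀ x ∈ C, HasGradientAt f (f' x) x)
    (hφ : ∀ x ∈ C, HasGradientAt φ (φ' x) x)
    (hf' : ∀ x ∈ C, HasFDerivAt f' (f'' x) x)
    (hφ' : ∀ x ∈ C, HasFDerivAt φ' (φ'' x) x)
    (L : ℝ) (hL : 0 < L)
    (hloewner : ∀ x ∈ C, ∀ v, ⟪f'' x v, v⟫ ≤ L * ⟪φ'' x v, v⟫) :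
    ∀ x ∈ C, ∀ y ∈ C, breg f f' x y ≤ L * breg φ φ' x y :=
  rel_smooth_of_hessian_loewner_general C hCc f φ f' φ' f'' φ'' hf hφ hf' hφ' L hloewner
end

section
/- Sufficient descent of BPGD: if f is L-smooth relative to φ on C and x⁺_τ = argmin_{u∈C} τ⟨∇f(x), u−x⟩ + D_φ(u,x) for τ ∈ (0, 1/L], then f(x⁺_τ) ≤ f(x) − D_φ(x, x⁺_τ)/τ. -/
open scoped RealInnerProductSpace

section Gradient

variable {E : Type*} [NormedAddCommGroup E] [InnerProductSpace ℝ E] [CompleteSpace E]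

theorem ConvexOn.inner_gradient_le_sub {s : Set E} {g : E → ℝ} {g' z u : E}
    (hg : ConvexOn ℝ s g) (hz : z ∈ s) (hu : u ∈ s) (hgrad : HasGradientAt g g' z) :
    ⟪g', u - z⟫ ≤ g u - g z := by
  have hline : HasDerivAt (g ∘ AffineMap.lineMap (k := ℝ) z u) ⟪g', u - z⟫ 0 :=
    (hasGradientAt_iff_hasFDerivAt.mp hgrad).comp_hasDerivAt_of_eq 0
      AffineMap.hasDerivAt_lineMap (AffineMap.lineMap_apply_zero z u).symm
  have hslope := (hg.comp_affineMap (AffineMap.lineMap z u)).le_slope_of_hasDerivAt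
    (by simpa using hz) (by simpa using hu) zero_lt_one hline
  simpa [slope_def_field] using hslope

theorem IsLocalMin.hasGradientAt_eq_zero {g : E → ℝ} {g' z : E} (hmin : IsLocalMin g z)
    (hgrad : HasGradientAt g g' z) : g' = 0 :=
  (InnerProductSpace.toDual ℝ E).map_eq_zero_iff.mp
    (hmin.hasFDerivAt_eq_zero (hasGradientAt_iff_hasFDerivAt.mp hgrad))

theorem hasGradientAt_inner_sub (g x u : E) : HasGradientAt (fun v => ⟪g, v - x⟫) g u :=
  ((InnerProductSpace.toDual ℝ E g).hasFDerivAt.sub_const ⟪g, x⟫).congr_of_eventuallyEq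
    (.of_forall fun _ => inner_sub_right _ _ _)

end Gradient

section Bregman

variable {n : ℕ} {φ : EuclideanSpace ℝ (Fin n) → ℝ}
  {φ' : EuclideanSpace ℝ (Fin n) → EuclideanSpace ℝ (Fin n)}

theorem breg_nonneg {s : Set (EuclideanSpace ℝ (Fin n))} {x y : EuclideanSpace ℝ (Fin n)}
    (hφ : ConvexOn ℝ s φ) (hx : x ∈ s) (hy : y ∈ s) (hgrad : HasGradientAt φ (φ' y) y) :
    0 ≤ breg φ φ' x y :=
  sub_nonneg.mpr (hφ.inner_gradient_le_sub hy hx hgrad)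

theorem breg_add_breg_swap (x y : EuclideanSpace ℝ (Fin n)) :
    breg φ φ' x y + breg φ φ' y x = ⟪φ' x - φ' y, x - y⟫ := by
  simp only [breg, inner_sub_right, real_inner_comm x, real_inner_comm y]
  ring

theorem hasGradientAt_breg_left {u y : EuclideanSpace ℝ (Fin n)}
    (hgrad : HasGradientAt φ (φ' u) u) :
    HasGradientAt (fun v => breg φ φ' v y) (φ' u - φ' y) u := by
  rw [hasGradientAt_iff_hasFDerivAt, map_sub]
  exact ((hasGradientAt_iff_hasFDerivAt.mp hgrad).sub_const (φ y)).sub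
    (hasGradientAt_inner_sub (φ' y) y u)

theorem smul_eq_sub_of_isLocalMin_inner_add_breg {g x xp : EuclideanSpace ℝ (Fin n)} {τ : ℝ}
    (hmin : IsLocalMin (fun u => τ * ⟪g, u - x⟫ + breg φ φ' u x) xp)
    (hgrad : HasGradientAt φ (φ' xp) xp) :
    τ • g = φ' x - φ' xp := by
  have hderiv :
      HasGradientAt (fun u => τ * ⟪g, u - x⟫ + breg φ φ' u x) (τ • g + (φ' xp - φ' x)) xp := by
    rw [hasGradientAt_iff_hasFDerivAt, map_add, map_smulₛₗ, RCLike.conj_to_real]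
    exact (HasFDerivAt.const_mul (hasGradientAt_inner_sub g x xp) τ).add
      (hasGradientAt_breg_left hgrad)
  rw [← sub_eq_zero, sub_sub_eq_add_sub, add_sub_assoc]
  exact hmin.hasGradientAt_eq_zero hderiv

end Bregman

theorem bpgd_sufficient_descent_general {n : ℕ}
    (C : Set (EuclideanSpace ℝ (Fin n)))
    (f φ : EuclideanSpace ℝ (Fin n) → ℝ)
    (f' φ' : EuclideanSpace ℝ (Fin n) → EuclideanSpace ℝ (Fin n))
    (hφ : ∀ z ∈ interior C, HasGradientAt φ (φ' z) z)
    (hφc : StrictConvexOn ℝ C φ)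
    (L : ℝ) (hL : 0 < L)
    (hsmooth : ∀ u ∈ C, ∀ v ∈ interior C, breg f f' u v ≤ L * breg φ φ' u v)
    (x : EuclideanSpace ℝ (Fin n)) (hx : x ∈ interior C)
    (τ : ℝ) (hτ0 : 0 < τ) (hτL : τ ≤ 1 / L)
    (xp : EuclideanSpace ℝ (Fin n)) (hxp : xp ∈ interior C)
    (hxpmin : IsMinOn (fun u => τ * ⟪f' x, u - x⟫ + breg φ φ' u x) C xp) :
    f xp ≤ f x - breg φ φ' x xp / τ := by
  have hopt : τ • f' x = φ' x - φ' xp :=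
    smul_eq_sub_of_isLocalMin_inner_add_breg
      (hxpmin.isLocalMin (mem_interior_iff_mem_nhds.mp hxp)) (hφ xp hxp)
  have hthree : τ * ⟪f' x, xp - x⟫ = -(breg φ φ' x xp + breg φ φ' xp x) := by
    rw [breg_add_breg_swap, ← real_inner_smul_left, hopt, ← neg_sub x xp, inner_neg_right]
  have hbreg_nonneg : 0 ≤ breg φ φ' xp x :=
    breg_nonneg hφc.convexOn (interior_subset hxp) (interior_subset hx) (hφ x hx)
  have hLτ : L ≤ 1 / τ := (le_one_div hL hτ0).mpr hτL
  have hdescent : breg f f' xp x ≤ breg φ φ' xp x / τ :=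
    calc breg f f' xp x ≤ L * breg φ φ' xp x := hsmooth xp (interior_subset hxp) x hx
      _ ≤ 1 / τ * breg φ φ' xp x := mul_le_mul_of_nonneg_right hLτ hbreg_nonneg
      _ = breg φ φ' xp x / τ := one_div_mul_eq_div τ _
  have hlin : ⟪f' x, xp - x⟫ = -(breg φ φ' x xp + breg φ φ' xp x) / τ := by
    rw [← hthree, mul_div_cancel_left₀ _ hτ0.ne']
  calc f xp ≤ f x + ⟪f' x, xp - x⟫ + breg φ φ' xp x / τ := by
        linarith [show breg f f' xp x = f xp - f x - ⟪f' x, xp - x⟫ from rfl]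
    _ = f x - breg φ φ' x xp / τ := by rw [hlin]; ring

theorem bpgd_sufficient_descent {n : ℕ}
    (C : Set (EuclideanSpace ℝ (Fin n))) (hCcl : IsClosed C) (hC : Convex ℝ C)
    (f φ : EuclideanSpace ℝ (Fin n) → ℝ)
    (f' φ' : EuclideanSpace ℝ (Fin n) → EuclideanSpace ℝ (Fin n))
    (hf : ∀ z ∈ interior C, HasGradientAt f (f' z) z)
    (hφ : ∀ z ∈ interior C, HasGradientAt φ (φ' z) z)
    (hfc : ConvexOn ℝ C f) (hφc : StrictConvexOn ℝ C φ)
    (L : ℝ) (hL : 0 < L)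
    (hsmooth : ∀ u ∈ C, ∀ v ∈ interior C, breg f f' u v ≤ L * breg φ φ' u v)
    (x : EuclideanSpace ℝ (Fin n)) (hx : x ∈ interior C)
    (τ : ℝ) (hτ0 : 0 < τ) (hτL : τ ≤ 1 / L)
    (xp : EuclideanSpace ℝ (Fin n)) (hxp : xp ∈ interior C)
    (hxpmin : IsMinOn (fun u => τ * ⟪f' x, u - x⟫ + breg φ φ' u x) C xp)
    (hxpuniq : ∀ z ∈ C,
      IsMinOn (fun u => τ * ⟪f' x, u - x⟫ + breg φ φ' u x) C z → z = xp) :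
    f xp ≤ f x - breg φ φ' x xp / τ :=
  bpgd_sufficient_descent_general C f φ f' φ' hφ hφc L hL hsmooth x hx τ hτ0 hτL xp hxp hxpmin
end

section
/- If f − φ is convex on C (f is 1-strongly convex relative to φ) and x⁺ = argmin_{u∈C} ⟨∇f(x), u−x⟩ + D_φ(u,x), then D_φ(x, x⁺) ≥ f(x) − min_{u∈C} f(u), i.e., the Bregman PL-inequality holds with η = 1. -/
/-!
Write `Ψ(u) = ⟪∇f(x), u - x⟫ + D_φ(u, x)` for the objective defining `x⁺`. Convexity of `f - φ`
at `x` reads `f z ≥ f x + Ψ(z)`, and minimality of `x⁺` gives `Ψ(x⁺) ≤ Ψ(z)`. Since `x⁺` is an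
interior minimizer, `∇φ(x⁺) = ∇φ(x) - ∇f(x)`; together with the symmetrized divergence
`D_φ(x, y) + D_φ(y, x) = ⟪∇φ(x) - ∇φ(y), x - y⟫` this gives `Ψ(x⁺) = -D_φ(x, x⁺)`.
-/
open scoped RealInnerProductSpace

theorem ConvexOn.add_fderiv_sub_le {E : Type*} [NormedAddCommGroup E] [NormedSpace ℝ E]
    {C : Set E} {h : E → ℝ} {h' : E →L[ℝ] ℝ} {w y : E} (hh : ConvexOn ℝ C h)
    (hw : w ∈ C) (hy : y ∈ C) (hd : HasFDerivAt h h' w) :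
    h w + h' (y - w) ≤ h y := by
  have hline : ConvexOn ℝ (Set.Icc (0 : ℝ) 1) (h ∘ AffineMap.lineMap w y) :=
    (hh.comp_affineMap _).subset (fun _ ht => hh.1.lineMap_mem hw hy ht) (convex_Icc 0 1)
  have hderiv : HasDerivAt (h ∘ AffineMap.lineMap (k := ℝ) w y) (h' (y - w)) 0 :=
    (by simpa using hd : HasFDerivAt h h' (AffineMap.lineMap w y (0 : ℝ))).comp_hasDerivAt 0
      AffineMap.hasDerivAt_lineMap
  have := hline.le_slope_of_hasDerivAt (by simp) (by simp) zero_lt_one hderiv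
  simp only [slope_def_field, Function.comp_apply, AffineMap.lineMap_apply_zero,
    AffineMap.lineMap_apply_one, sub_zero, div_one] at this
  linarith

section Bregman

variable {n : ℕ} {φ : EuclideanSpace ℝ (Fin n) → ℝ}
  {φ' : EuclideanSpace ℝ (Fin n) → EuclideanSpace ℝ (Fin n)}

/-- The objective minimized by the mirror-descent step from `x` with gradient `g`. -/
noncomputable def mirrorStepObjective (φ : EuclideanSpace ℝ (Fin n) → ℝ)
    (φ' : EuclideanSpace ℝ (Fin n) → EuclideanSpace ℝ (Fin n))
    (g x u : EuclideanSpace ℝ (Fin n)) : ℝ :=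
  ⟪g, u - x⟫ + breg φ φ' u x

theorem mirrorStepObjective_eq_neg_breg {g x xp : EuclideanSpace ℝ (Fin n)}
    (hstep : φ' xp = φ' x - g) :
    mirrorStepObjective φ φ' g x xp = -breg φ φ' x xp := by
  have hg : g = φ' x - φ' xp := by rw [hstep, sub_sub_cancel]
  rw [mirrorStepObjective, eq_neg_iff_add_eq_zero, add_assoc, breg_add_breg_swap, hg,
    ← inner_add_left, sub_add_sub_cancel, sub_self, inner_zero_left]

theorem hasFDerivAt_mirrorStepObjective {g x u : EuclideanSpace ℝ (Fin n)}
    (hφ : HasGradientAt φ (φ' u) u) :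
    HasFDerivAt (mirrorStepObjective φ φ' g x)
      (InnerProductSpace.toDual ℝ _ (g + (φ' u - φ' x))) u := by
  have hinner : ∀ c : EuclideanSpace ℝ (Fin n),
      HasFDerivAt (fun v => ⟪c, v - x⟫) (InnerProductSpace.toDual ℝ _ c) u := fun c => by
    simpa [inner_sub_right] using ((InnerProductSpace.toDual ℝ _ c).hasFDerivAt).sub_const ⟪c, x⟫
  rw [map_add, map_sub]
  exact (hinner g).add ((hφ.hasFDerivAt.sub_const (φ x)).sub (hinner (φ' x)))

theorem eq_sub_of_isMinOn_mirrorStepObjective {C : Set (EuclideanSpace ℝ (Fin n))}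
    {g x xp : EuclideanSpace ℝ (Fin n)} (hxp : xp ∈ interior C)
    (hφ : HasGradientAt φ (φ' xp) xp) (hmin : IsMinOn (mirrorStepObjective φ φ' g x) C xp) :
    φ' xp = φ' x - g := by
  have hzero := (hmin.isLocalMin (mem_interior_iff_mem_nhds.1 hxp)).hasFDerivAt_eq_zero
    (hasFDerivAt_mirrorStepObjective hφ)
  rw [LinearIsometryEquiv.map_eq_zero_iff] at hzero
  rw [eq_sub_iff_add_eq, add_comm, ← sub_eq_zero, ← hzero]
  abel

theorem add_mirrorStepObjective_le_of_convexOn_sub {C : Set (EuclideanSpace ℝ (Fin n))}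
    {f : EuclideanSpace ℝ (Fin n) → ℝ} {g x z : EuclideanSpace ℝ (Fin n)}
    (hfφ : ConvexOn ℝ C (fun u => f u - φ u)) (hx : x ∈ C) (hz : z ∈ C)
    (hf : HasGradientAt f g x) (hφ : HasGradientAt φ (φ' x) x) :
    f x + mirrorStepObjective φ φ' g x z ≤ f z := by
  have hsub : HasFDerivAt (fun u => f u - φ u)
      (InnerProductSpace.toDual ℝ _ g - InnerProductSpace.toDual ℝ _ (φ' x)) x :=
    hf.hasFDerivAt.sub hφ.hasFDerivAt
  have := hfφ.add_fderiv_sub_le hx hz hsub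
  simp only [sub_apply, InnerProductSpace.toDual_apply_apply] at this
  simp only [mirrorStepObjective, breg]
  linarith

end Bregman

theorem bregman_pl_of_rel_strong_convexity_general {n : ℕ}
    (C : Set (EuclideanSpace ℝ (Fin n)))
    (f φ : EuclideanSpace ℝ (Fin n) → ℝ)
    (f' φ' : EuclideanSpace ℝ (Fin n) → EuclideanSpace ℝ (Fin n))
    (hf : ∀ z ∈ interior C, HasGradientAt f (f' z) z)
    (hφ : ∀ z ∈ interior C, HasGradientAt φ (φ' z) z)
    (hfφ : ConvexOn ℝ C (fun z => f z - φ z))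
    (z : EuclideanSpace ℝ (Fin n)) (hz : z ∈ C)
    (x : EuclideanSpace ℝ (Fin n)) (hx : x ∈ interior C)
    (xp : EuclideanSpace ℝ (Fin n)) (hxp : xp ∈ interior C)
    (hxpmin : IsMinOn (fun u => ⟪f' x, u - x⟫ + breg φ φ' u x) C xp) :
    breg φ φ' x xp ≥ f x - f z := by
  have hstep : φ' xp = φ' x - f' x :=
    eq_sub_of_isMinOn_mirrorStepObjective hxp (hφ xp hxp) hxpmin
  have hrel : f x + mirrorStepObjective φ φ' (f' x) x z ≤ f z :=
    add_mirrorStepObjective_le_of_convexOn_sub hfφ (interior_subset hx) hz (hf x hx) (hφ x hx)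
  have hmin : mirrorStepObjective φ φ' (f' x) x xp ≤ mirrorStepObjective φ φ' (f' x) x z :=
    hxpmin hz
  rw [mirrorStepObjective_eq_neg_breg hstep] at hmin
  linarith

theorem bregman_pl_of_rel_strong_convexity {n : ℕ}
    (C : Set (EuclideanSpace ℝ (Fin n))) (hCcl : IsClosed C) (hC : Convex ℝ C)
    (f φ : EuclideanSpace ℝ (Fin n) → ℝ)
    (f' φ' : EuclideanSpace ℝ (Fin n) → EuclideanSpace ℝ (Fin n))
    (hf : ∀ z ∈ interior C, HasGradientAt f (f' z) z)
    (hφ : ∀ z ∈ interior C, HasGradientAt φ (φ' z) z)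
    (hfφ : ConvexOn ℝ C (fun z => f z - φ z))
    (z : EuclideanSpace ℝ (Fin n)) (hz : z ∈ C) (hzmin : IsMinOn f C z)
    (x : EuclideanSpace ℝ (Fin n)) (hx : x ∈ interior C)
    (xp : EuclideanSpace ℝ (Fin n)) (hxp : xp ∈ interior C)
    (hxpmin : IsMinOn (fun u => ⟪f' x, u - x⟫ + breg φ φ' u x) C xp)
    (hxpuniq : ∀ w ∈ C,
      IsMinOn (fun u => ⟪f' x, u - x⟫ + breg φ φ' u x) C w → w = xp) :
    breg φ φ' x xp ≥ f x - f z :=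
  bregman_pl_of_rel_strong_convexity_general C f φ f' φ' hf hφ hfφ z hz x hx xp hxp hxpmin
end

section
/- Coarse correction yields a descent direction: under first-order coherence ∇ψ(x_H⁰) = R∇f(x) with R = Pᵀ, convexity of ψ, and m BPGD steps on ψ each satisfying sufficient descent ψ(x_H^i) ≤ ψ(x_H^{i−1}) − D_{φ_H}(x_H^{i−1}, x_H^i)/τ_H with x_H^m ≠ x_H⁰, the direction d = P(x_H^m − x_H⁰) satisfies ⟨∇f(x), d⟩ ≤ −(1/τ_H) Σ_{i=1}^m D_{φ_H}(x_H^{i−1}, x_H^i) < 0. -/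
open scoped RealInnerProductSpace

lemma grad_ineq {N : ℕ} {g : EuclideanSpace ℝ (Fin N) → ℝ}
    (hc : ConvexOn ℝ Set.univ g) {a g' : EuclideanSpace ℝ (Fin N)}
    (hg : HasGradientAt g g' a) (b : EuclideanSpace ℝ (Fin N)) :
    ⟪g', b - a⟫ ≤ g b - g a := by
  have hline : ∀ t : ℝ, (AffineMap.lineMap a b : ℝ →ᵃ[ℝ] _) t = t • (b - a) + a := by
    intro t; simp [AffineMap.lineMap_apply, vsub_eq_sub, vadd_eq_add]
  have hconv : ConvexOn ℝ Set.univ (g ∘ (AffineMap.lineMap a b : ℝ →ᵃ[ℝ] _)) := by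
    simpa using hc.comp_affineMap (AffineMap.lineMap a b)
  have hd : HasDerivAt (fun t : ℝ => (AffineMap.lineMap a b : ℝ →ᵃ[ℝ] _) t) (b - a) 0 := by
    simp only [hline]
    simpa using ((hasDerivAt_id (0:ℝ)).smul_const (b - a)).add_const a
  have hgf := hg.hasFDerivAt
  have h0 : (AffineMap.lineMap a b : ℝ →ᵃ[ℝ] _) 0 = a := by simp [hline]
  rw [← h0] at hgf
  have hcomp : HasDerivAt (g ∘ (AffineMap.lineMap a b : ℝ →ᵃ[ℝ] _)) ⟪g', b - a⟫ 0 := by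
    have := hgf.comp_hasDerivAt (0:ℝ) hd
    simpa [InnerProductSpace.toDual_apply_apply] using this
  have := hconv.le_slope_of_hasDerivAt (Set.mem_univ 0) (Set.mem_univ 1) one_pos hcomp
  rw [slope_def_field] at this
  simpa [hline, h0] using this

lemma grad_ineq_strict {N : ℕ} {g : EuclideanSpace ℝ (Fin N) → ℝ}
    (hc : StrictConvexOn ℝ Set.univ g) {a g' : EuclideanSpace ℝ (Fin N)}
    (hg : HasGradientAt g g' a) {b : EuclideanSpace ℝ (Fin N)} (hab : a ≠ b) :
    ⟪g', b - a⟫ < g b - g a := by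
  set mid : EuclideanSpace ℝ (Fin N) := (1/2 : ℝ) • a + (1/2 : ℝ) • b with hmid
  have hmidlt : g mid < (1/2 : ℝ) * g a + (1/2 : ℝ) * g b :=
    hc.2 (Set.mem_univ a) (Set.mem_univ b) hab (by norm_num) (by norm_num) (by norm_num)
  have h1 := grad_ineq hc.convexOn hg mid
  have hsub : mid - a = (1/2 : ℝ) • (b - a) := by
    rw [hmid]; module
  rw [hsub, real_inner_smul_right] at h1
  linarith

theorem coarse_correction_descent_direction {n nH : ℕ}
    (f : EuclideanSpace ℝ (Fin n) → ℝ) (ψ φH : EuclideanSpace ℝ (Fin nH) → ℝ)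
    (P : EuclideanSpace ℝ (Fin nH) →L[ℝ] EuclideanSpace ℝ (Fin n))
    (R : EuclideanSpace ℝ (Fin n) →L[ℝ] EuclideanSpace ℝ (Fin nH))
    (hR : R = ContinuousLinearMap.adjoint P)
    (hψconv : ConvexOn ℝ Set.univ ψ)
    (φH' : EuclideanSpace ℝ (Fin nH) → EuclideanSpace ℝ (Fin nH))
    (hφHconv : StrictConvexOn ℝ Set.univ φH)
    (hφH : ∀ z, HasGradientAt φH (φH' z) z)
    (x : EuclideanSpace ℝ (Fin n))
    (gradf : EuclideanSpace ℝ (Fin n)) (hf : HasGradientAt f gradf x)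
    (gradψ : EuclideanSpace ℝ (Fin nH)) (hψ : HasGradientAt ψ gradψ (R x))
    (hcoherence : gradψ = R gradf)
    (τH : ℝ) (hτH : 0 < τH)
    (m : ℕ) (hm : 1 ≤ m)
    (xH : ℕ → EuclideanSpace ℝ (Fin nH)) (hxH0 : xH 0 = R x)
    (hdescent : ∀ i ∈ Finset.Icc 1 m,
      ψ (xH i) ≤ ψ (xH (i - 1)) - breg φH φH' (xH (i - 1)) (xH i) / τH)
    (hne : xH m ≠ xH 0) :
    ⟪gradf, P (xH m - xH 0)⟫ ≤
        -(1 / τH) * ∑ i ∈ Finset.Icc 1 m, breg φH φH' (xH (i - 1)) (xH i) ∧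
      ⟪gradf, P (xH m - xH 0)⟫ < 0 := by
  -- breg nonneg
  have hbnonneg : ∀ a b : EuclideanSpace ℝ (Fin nH), 0 ≤ breg φH φH' a b := by
    intro a b
    have := grad_ineq hφHconv.convexOn (hφH b) a
    simp only [breg]; linarith
  -- adjoint identity
  have hinner : ⟪gradf, P (xH m - xH 0)⟫ = ⟪gradψ, xH m - xH 0⟫ := by
    rw [hcoherence, hR, ContinuousLinearMap.adjoint_inner_left]
  -- convexity: gradient inequality for ψ at xH 0
  have hgradψ : HasGradientAt ψ gradψ (xH 0) := by rw [hxH0]; exact hψ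
  have hconvineq : ⟪gradψ, xH m - xH 0⟫ ≤ ψ (xH m) - ψ (xH 0) :=
    grad_ineq hψconv hgradψ (xH m)
  -- telescoping
  have htel : ∀ k, k ≤ m → ψ (xH k) ≤ ψ (xH 0) -
      (∑ i ∈ Finset.Icc 1 k, breg φH φH' (xH (i - 1)) (xH i)) / τH := by
    intro k
    induction k with
    | zero => simp
    | succ k ih =>
      intro hk
      have ihk := ih (Nat.le_of_succ_le hk)
      have hd := hdescent (k + 1) (Finset.mem_Icc.mpr ⟨Nat.le_add_left 1 k, hk⟩)
      rw [Finset.sum_Icc_succ_top (Nat.le_add_left 1 k)]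
      simp only [Nat.add_sub_cancel] at hd ⊢
      rw [add_div]
      linarith
  have hS := htel m le_rfl
  -- positivity of the sum
  have hex : ∃ i ∈ Finset.Icc 1 m, xH i ≠ xH (i - 1) := by
    by_contra hcon
    push_neg at hcon
    have hall : ∀ k, k ≤ m → xH k = xH 0 := by
      intro k
      induction k with
      | zero => intro _; rfl
      | succ k ih =>
        intro hk
        have := hcon (k + 1) (Finset.mem_Icc.mpr ⟨Nat.le_add_left 1 k, hk⟩)
        simp only [Nat.add_sub_cancel] at this
        rw [this]; exact ih (Nat.le_of_succ_le hk)
    exact hne (hall m le_rfl)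
  obtain ⟨i, hi, hnei⟩ := hex
  have hpos : 0 < ∑ i ∈ Finset.Icc 1 m, breg φH φH' (xH (i - 1)) (xH i) := by
    refine Finset.sum_pos' (fun j _ => hbnonneg _ _) ⟨i, hi, ?_⟩
    have := grad_ineq_strict hφHconv (hφH (xH i)) hnei
    simp only [breg]; linarith
  have hmain : ⟪gradf, P (xH m - xH 0)⟫ ≤
      -(1 / τH) * ∑ i ∈ Finset.Icc 1 m, breg φH φH' (xH (i - 1)) (xH i) := by
    rw [hinner]
    have : -(1 / τH) * ∑ i ∈ Finset.Icc 1 m, breg φH φH' (xH (i - 1)) (xH i)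
        = -((∑ i ∈ Finset.Icc 1 m, breg φH φH' (xH (i - 1)) (xH i)) / τH) := by
      ring
    rw [this]
    linarith
  refine ⟨hmain, lt_of_le_of_lt hmain ?_⟩
  have : 0 < (1 / τH) * ∑ i ∈ Finset.Icc 1 m, breg φH φH' (xH (i - 1)) (xH i) :=
    mul_pos (by positivity) hpos
  linarith
end

section
/- Doubly-bounded log-barrier relative smoothness: if f is L-smooth relative to φ(x) = −Σᵢ ln xᵢ on the positive orthant, then f is L-smooth relative to φ_□(x) = −Σᵢ [ln(xᵢ − lᵢ) + ln(uᵢ − xᵢ)] on the open box (l, u), i.e., D_f(x,y) ≤ L·D_{φ_□}(x,y) for all x, y ∈ (l, u). -/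
/-- Bregman divergence of the log-barrier `φ(x) = -∑ ln xᵢ` on the positive orthant. -/
noncomputable def logBarrierDiv {n : ℕ} (x y : Fin n → ℝ) : ℝ :=
  ∑ i, (Real.log (y i / x i) + x i / y i - 1)

lemma key_scalar (l u x y : ℝ) (hl : 0 ≤ l) (hx1 : l < x) (hx2 : x < u)
    (hy1 : l < y) (hy2 : y < u) :
    Real.log (y / x) + x / y - 1 ≤
      (Real.log ((y - l) / (x - l)) + (x - l) / (y - l) - 1) +
      (Real.log ((u - y) / (u - x)) + (u - x) / (u - y) - 1) := by
  have hx : 0 < x := lt_of_le_of_lt hl hx1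
  have hy : 0 < y := lt_of_le_of_lt hl hy1
  have hxl : 0 < x - l := by linarith
  have hyl : 0 < y - l := by linarith
  have hux : 0 < u - x := by linarith
  have huy : 0 < u - y := by linarith
  set t : ℝ := ((y - l) * (u - y) * x) / ((x - l) * (u - x) * y) with ht
  have htpos : 0 < t := by positivity
  have hlogt : Real.log t =
      (Real.log (y - l) - Real.log (x - l)) + (Real.log (u - y) - Real.log (u - x))
        - (Real.log y - Real.log x) := by
    rw [ht, Real.log_div (by positivity) (by positivity),
      Real.log_mul (by positivity) hx.ne', Real.log_mul hyl.ne' huy.ne',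
      Real.log_mul (by positivity) hy.ne', Real.log_mul hxl.ne' hux.ne']
    ring
  have hlb : 1 - 1 / t ≤ Real.log t := by
    have := Real.log_le_sub_one_of_pos (x := 1 / t) (by positivity)
    rw [Real.log_div one_ne_zero htpos.ne', Real.log_one] at this
    linarith
  have hinv : 1 / t = ((x - l) * (u - x) * y) / ((y - l) * (u - y) * x) := by
    rw [ht, one_div_div]
  have hpoly : ((x - l) * (u - x) * y) / ((y - l) * (u - y) * x)
      ≤ (x - l) / (y - l) + (u - x) / (u - y) - x / y := by
    rw [div_le_iff₀ (by positivity), div_add_div _ _ hyl.ne' huy.ne',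
      div_sub_div _ _ (by positivity) hy.ne', div_mul_eq_mul_div, le_div_iff₀ (by positivity)]
    nlinarith [mul_nonneg (mul_nonneg (mul_pos hyl huy).le
      (mul_nonneg hl (by linarith : (0:ℝ) ≤ u))) (sq_nonneg (x - y))]
  have h1 : Real.log (y / x) = Real.log y - Real.log x := Real.log_div hy.ne' hx.ne'
  have h2 : Real.log ((y - l) / (x - l)) = Real.log (y - l) - Real.log (x - l) :=
    Real.log_div hyl.ne' hxl.ne'
  have h3 : Real.log ((u - y) / (u - x)) = Real.log (u - y) - Real.log (u - x) :=
    Real.log_div huy.ne' hux.ne'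
  rw [h1, h2, h3]
  have := hinv ▸ hlb
  linarith [hlogt ▸ this, hpoly]

theorem doubly_bounded_log_barrier_rel_smooth {n : ℕ}
    (l u : Fin n → ℝ) (hlu : ∀ i, l i < u i) (hl : ∀ i, 0 ≤ l i)
    (Df : (Fin n → ℝ) → (Fin n → ℝ) → ℝ) (L : ℝ) (hL : 0 < L)
    (hsmooth : ∀ x y : Fin n → ℝ, (∀ i, 0 < x i) → (∀ i, 0 < y i) →
      Df x y ≤ L * logBarrierDiv x y) :
    ∀ x y : Fin n → ℝ, (∀ i, l i < x i ∧ x i < u i) → (∀ i, l i < y i ∧ y i < u i) →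
      Df x y ≤ L * (logBarrierDiv (x - l) (y - l) + logBarrierDiv (u - x) (u - y)) := by
  intro x y hx hy
  have hxpos : ∀ i, 0 < x i := fun i => lt_of_le_of_lt (hl i) (hx i).1
  have hypos : ∀ i, 0 < y i := fun i => lt_of_le_of_lt (hl i) (hy i).1
  have h1 := hsmooth x y hxpos hypos
  have h2 : logBarrierDiv x y ≤
      logBarrierDiv (x - l) (y - l) + logBarrierDiv (u - x) (u - y) := by
    unfold logBarrierDiv
    rw [← Finset.sum_add_distrib]
    apply Finset.sum_le_sum
    intro i _
    simp only [Pi.sub_apply]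
    exact key_scalar (l i) (u i) (x i) (y i) (hl i) (hx i).1 (hx i).2 (hy i).1 (hy i).2
  calc Df x y ≤ L * logBarrierDiv x y := h1
    _ ≤ L * (logBarrierDiv (x - l) (y - l) + logBarrierDiv (u - x) (u - y)) :=
      mul_le_mul_of_nonneg_left h2 hL.le
end

section
/- Relative smoothness of the Poisson log-likelihood: f(x) = KL(b, Ax) = Σᵢ bᵢ ln(bᵢ/(Ax)ᵢ) − Σᵢ(bᵢ − (Ax)ᵢ) is ‖b‖₁-smooth relative to the log-barrier φ(x) = −Σⱼ ln xⱼ on ℝⁿ_{++}, i.e., ‖b‖₁·φ − f is convex on ℝⁿ_{++}. -/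
/-!
Up to an affine function, `‖b‖₁ φ - f` is `∑ᵢ bᵢ (log (aᵢ ⬝ x) - ∑ⱼ log xⱼ)`, where `aᵢ` is the
`i`-th row of `A`. Each summand is convex because
`log (a ⬝ x) - ∑ⱼ log xⱼ = log ∑ⱼ aⱼ exp (-∑_{k ≠ j} log xₖ)` is the logarithm of a nonnegative
combination of exponentials of convex functions, and such a log-sum-exp is convex by Hölder's
inequality with exponents `1/p`, `1/q`.
-/

open Finset Real Matrix

theorem ConvexOn.finset_sum {ι E : Type*} [AddCommGroup E] [Module ℝ E] {s : Set E}
    (hs : Convex ℝ s) (t : Finset ι) {f : ι → E → ℝ} (hf : ∀ i ∈ t, ConvexOn ℝ s (f i)) :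
    ConvexOn ℝ s (fun x => ∑ i ∈ t, f i x) := by
  induction t using Finset.cons_induction with
  | empty => simpa using convexOn_const 0 hs
  | cons i t hi ih =>
    simp only [sum_cons]
    exact (hf i (mem_cons_self _ _)).add (ih fun j hj => hf j (mem_cons_of_mem hj))

theorem Real.sum_rpow_mul_rpow_le {ι : Type*} (t : Finset ι) {u v : ι → ℝ}
    (hu : ∀ i ∈ t, 0 ≤ u i) (hv : ∀ i ∈ t, 0 ≤ v i) {p q : ℝ} (hp : 0 < p) (hq : 0 < q)
    (hpq : p + q = 1) :
    ∑ i ∈ t, u i ^ p * v i ^ q ≤ (∑ i ∈ t, u i) ^ p * (∑ i ∈ t, v i) ^ q := by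
  have h := inner_le_Lp_mul_Lq_of_nonneg t (HolderConjugate.inv_inv hp hq hpq)
    (fun i hi => rpow_nonneg (hu i hi) p) (fun i hi => rpow_nonneg (hv i hi) q)
  simp only [one_div, inv_inv] at h
  rwa [sum_congr rfl fun i hi => rpow_rpow_inv (hu i hi) hp.ne',
    sum_congr rfl fun i hi => rpow_rpow_inv (hv i hi) hq.ne'] at h

theorem ConvexOn.log_sum_mul_exp {ι E : Type*} [AddCommGroup E] [Module ℝ E] {s : Set E}
    {t : Finset ι} {c : ι → ℝ} (hc : ∀ i ∈ t, 0 ≤ c i) (hc₀ : ∃ i ∈ t, c i ≠ 0)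
    {g : ι → E → ℝ} (hg : ∀ i ∈ t, ConvexOn ℝ s (g i)) (hs : Convex ℝ s) :
    ConvexOn ℝ s (fun x => log (∑ i ∈ t, c i * exp (g i x))) := by
  set S := fun x => ∑ i ∈ t, c i * exp (g i x)
  have hS : ∀ x, 0 < S x := fun x => by
    obtain ⟨i, hi, hci⟩ := hc₀
    exact sum_pos' (fun j hj => mul_nonneg (hc j hj) (exp_pos _).le)
      ⟨i, hi, mul_pos ((hc i hi).lt_of_ne' hci) (exp_pos _)⟩
  refine (convexOn_iff_forall_pos.2 ⟨hs, fun x hx y hy p q hp hq hpq => ?_⟩)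
  have hterm : ∀ i ∈ t, c i * exp (g i (p • x + q • y)) ≤
      (c i * exp (g i x)) ^ p * (c i * exp (g i y)) ^ q := fun i hi => by
    have hc_split : c i = c i ^ p * c i ^ q := by
      rw [← rpow_add_of_nonneg (hc i hi) hp.le hq.le, hpq, rpow_one]
    calc c i * exp (g i (p • x + q • y))
        ≤ c i * exp (g i x * p + g i y * q) := by
          gcongr
          · exact hc i hi
          · simpa only [smul_eq_mul, mul_comm] using (hg i hi).2 hx hy hp.le hq.le hpq
      _ = (c i * exp (g i x)) ^ p * (c i * exp (g i y)) ^ q := by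
          rw [mul_rpow (hc i hi) (exp_pos _).le, mul_rpow (hc i hi) (exp_pos _).le,
            exp_add, exp_mul, exp_mul, mul_mul_mul_comm, ← hc_split]
  have hholder : S (p • x + q • y) ≤ S x ^ p * S y ^ q :=
    (sum_le_sum hterm).trans <| sum_rpow_mul_rpow_le t
      (fun i hi => mul_nonneg (hc i hi) (exp_pos _).le)
      (fun i hi => mul_nonneg (hc i hi) (exp_pos _).le) hp hq hpq
  calc log (S (p • x + q • y)) ≤ log (S x ^ p * S y ^ q) := log_le_log (hS _) hholder
    _ = p • log (S x) + q • log (S y) := by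
      rw [log_mul (rpow_pos_of_pos (hS x) p).ne' (rpow_pos_of_pos (hS y) q).ne',
        log_rpow (hS x), log_rpow (hS y), smul_eq_mul, smul_eq_mul]

theorem dotProduct_pos_of_nonneg {ι : Type*} [Fintype ι] {a x : ι → ℝ} (ha : ∀ j, 0 ≤ a j)
    (ha₀ : ∃ j, a j ≠ 0) (hx : ∀ j, 0 < x j) : 0 < a ⬝ᵥ x := by
  obtain ⟨j, hj⟩ := ha₀
  exact sum_pos' (fun k _ => mul_nonneg (ha k) (hx k).le)
    ⟨j, mem_univ j, mul_pos ((ha j).lt_of_ne' hj) (hx j)⟩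

theorem convex_pos_orthant (ι : Type*) : Convex ℝ {x : ι → ℝ | ∀ j, 0 < x j} := by
  simpa [Set.pi, Set.mem_Ioi] using convex_pi (s := Set.univ) fun j _ => convex_Ioi (0 : ℝ)

theorem convexOn_log_dotProduct_sub_sum_log {ι : Type*} [Fintype ι]
    {a : ι → ℝ} (ha : ∀ j, 0 ≤ a j) (ha₀ : ∃ j, a j ≠ 0) :
    ConvexOn ℝ {x : ι → ℝ | ∀ j, 0 < x j} (fun x => log (a ⬝ᵥ x) - ∑ j, log (x j)) := by
  classical
  have hs := convex_pos_orthant ι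
  have hneg_log : ∀ k, ConvexOn ℝ {x : ι → ℝ | ∀ j, 0 < x j} (fun x => -log (x k)) := fun k =>
    (strictConcaveOn_log_Ioi.concaveOn.neg.comp_linearMap
      (LinearMap.proj (R := ℝ) (φ := fun _ : ι => ℝ) k)).subset (fun _ (hx : ∀ j, 0 < _) => hx k) hs
  refine (ConvexOn.log_sum_mul_exp (fun j _ => ha j) (let ⟨j, hj⟩ := ha₀; ⟨j, mem_univ j, hj⟩)
    (fun j _ => ConvexOn.finset_sum hs (univ.erase j) fun k _ => hneg_log k) hs).congr
    fun x hx => ?_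
  have hmonomial : ∀ j, exp (∑ k ∈ univ.erase j, -log (x k)) = x j * exp (-∑ k, log (x k)) :=
    fun j => by
      rw [← add_sum_erase univ _ (mem_univ j), sum_neg_distrib, neg_add, exp_add,
        exp_neg (log (x j)), exp_log (hx j), ← sum_neg_distrib]
      field_simp [(hx j).ne']
  simp only [hmonomial, ← mul_assoc, ← sum_mul]
  change log (a ⬝ᵥ x * _) = _
  rw [log_mul (dotProduct_pos_of_nonneg ha ha₀ hx).ne' (exp_pos _).ne', log_exp, sub_eq_add_neg]

theorem poisson_loglik_rel_smooth_log_barrier {m n : ℕ}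
    (A : Matrix (Fin m) (Fin n) ℝ) (hA : ∀ i j, 0 ≤ A i j)
    (hrows : ∀ i, ∃ j, A i j ≠ 0)
    (b : Fin m → ℝ) (hb : ∀ i, 0 < b i) :
    ConvexOn ℝ {x : Fin n → ℝ | ∀ j, 0 < x j}
      (fun x =>
        (∑ i, b i) * (-∑ j, Real.log (x j)) -
          ∑ i, (b i * Real.log (b i / (A.mulVec x i)) - b i + A.mulVec x i)) := by
  have hs := convex_pos_orthant (Fin n)
  have hrow : ∀ i, ConvexOn ℝ {x : Fin n → ℝ | ∀ j, 0 < x j}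
      (fun x => b i * (log ((A *ᵥ x) i) - ∑ j, log (x j)) + -(A *ᵥ x) i) := fun i =>
    ((convexOn_log_dotProduct_sub_sum_log (hA i) (hrows i)).smul (hb i).le).add
      ((LinearMap.proj i ∘ₗ A.mulVecLin).concaveOn hs).neg
  refine ((ConvexOn.finset_sum hs univ fun i _ => hrow i).add_const
    (∑ i, (b i - b i * log (b i)))).congr fun x hx => ?_
  have hAx : ∀ i, 0 < (A *ᵥ x) i := fun i => dotProduct_pos_of_nonneg (hA i) (hrows i) hx
  simp only [Pi.add_apply, log_div (hb _).ne' (hAx _).ne', mul_sub, sum_add_distrib,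
    sum_sub_distrib, sum_neg_distrib, ← sum_mul]
  ring
end
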